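/- arXiv:0801.3218 — 2 statements merged into one kernel-verified Lean document; each statement's English description precedes it below -/
import Mathlib

section
/- Let m, n ≥ 3 be natural numbers. Then k_m ⊆ k_n if and only if Q(ζ_m) ⊆ Q(ζ_n) or m ∈ {3, 4, 6}. -/
/-- `ζ_n = e^{2πi/n}`, a primitive `n`-th root of unity in `ℂ`. -/
noncomputable def zeta (n : ℕ) : ℂ := Complex.exp (2 * Real.pi * Complex.I / n)

/-- The `n`-th cyclotomic field `ℚ(ζ_n)`, as a subfield of `ℂ`. -/
noncomputable def cyclField (n : ℕ) : IntermediateField ℚ ℂ :=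
  IntermediateField.adjoin ℚ {zeta n}

/-- The maximal real subfield `k_n = ℚ(ζ_n + ζ_n⁻¹)` of `ℚ(ζ_n)`. -/
noncomputable def realCyclField (n : ℕ) : IntermediateField ℚ ℂ :=
  IntermediateField.adjoin ℚ {zeta n + (zeta n)⁻¹}

/-!
Put `N = lcm(m, n)`. Every automorphism of `ℚ(ζ_N)` is `σ_u : ζ_N ↦ ζ_N^u` for a unique unit
`u` mod `N`, and it acts on `ζ_d` (`d ∣ N`) as `ζ_d ↦ ζ_d^u`. By Galois theory, `ℚ(ζ_m) ⊆ ℚ(ζ_n)`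
iff every `u ≡ 1 (mod n)` has `u ≡ 1 (mod m)`, and `k_m ⊆ k_n` iff every `u ≡ ±1 (mod n)` has
`u ≡ ±1 (mod m)`. The second condition follows from the first by replacing `u` with `-u`, and it
holds trivially when all units mod `m` are `±1`, i.e. `m ∈ {3, 4, 6}`. Conversely, if some
`u ≡ 1 (mod n)` is `≡ -1 (mod m)`, then `gcd(m, n) ∣ 2`, so by the Chinese remainder theorem every
unit mod `m` lifts to some `u ≡ 1 (mod n)`, and the second condition forces all units mod `m` to
be `±1`.
-/

open IntermediateField Polynomial

lemma Nat.exists_coprime_one_lt_add_one_lt {m : ℕ} (hm : 3 ≤ m) (h346 : m ∉ ({3, 4, 6} : Set ℕ)) :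
    ∃ c, 1 < c ∧ c + 1 < m ∧ c.Coprime m := by
  simp only [Set.mem_insert_iff, Set.mem_singleton_iff, not_or] at h346
  rcases Nat.even_or_odd m with ⟨k, rfl⟩ | hodd
  · -- an odd `c` with `m = 2c + 2` or `m = 2c + 4`
    refine ⟨2 * (k / 2) - 1, by omega, by omega, ?_⟩
    have hc : Odd (2 * (k / 2) - 1) := ⟨k / 2 - 1, by omega⟩
    rcases (by omega : k + k = (2 * (k / 2) - 1) * 2 + 2 ∨ k + k = (2 * (k / 2) - 1) * 2 + 4)
      with h | h <;> rw [h]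
    · exact (Nat.coprime_mul_left_add_right _ _ _).2 (Nat.coprime_two_right.2 hc)
    · exact (Nat.coprime_mul_left_add_right _ _ _).2
        ((Nat.coprime_pow_right_iff two_pos _ 2).2 (Nat.coprime_two_right.2 hc))
  · exact ⟨2, by omega, by obtain ⟨k, rfl⟩ := hodd; omega, Nat.coprime_two_left.2 hodd⟩

namespace ZMod

lemma forall_units_eq_one_or_eq_neg_one_iff {m : ℕ} (hm : 3 ≤ m) :
    (∀ c : (ZMod m)ˣ, c = 1 ∨ c = -1) ↔ m ∈ ({3, 4, 6} : Set ℕ) := by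
  refine ⟨fun H => ?_, fun h346 => ?_⟩
  · by_contra h346
    obtain ⟨c, hc1, hcm, hcop⟩ := Nat.exists_coprime_one_lt_add_one_lt hm h346
    rcases H (unitOfCoprime c hcop) with h | h <;> rw [Units.ext_iff, coe_unitOfCoprime] at h
    · rw [Units.val_one, ← Nat.cast_one, natCast_eq_natCast_iff, Nat.ModEq,
        Nat.mod_eq_of_lt (by omega), Nat.mod_eq_of_lt (by omega)] at h
      omega
    · rw [Units.val_neg, Units.val_one, eq_neg_iff_add_eq_zero, ← Nat.cast_succ,
        natCast_eq_zero_iff] at h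
      exact absurd (Nat.le_of_dvd (by omega) h) (by omega)
  · rcases h346 with rfl | rfl | rfl <;> decide

lemma unitsMap_neg {d m : ℕ} (hd : d ∣ m) (u : (ZMod m)ˣ) : unitsMap hd (-u) = -unitsMap hd u :=
  Units.map_neg _ u

lemma unitsMap_eq_one_of_unitsMap_neg_one {d m : ℕ} (hd : d ∣ m)
    (h : unitsMap hd (-1) = 1) (c : (ZMod m)ˣ) : unitsMap hd c = 1 := by
  have hd2 : d ∣ 2 := by
    rw [unitsMap_def, Units.map_neg_one, Units.ext_iff, Units.val_neg, Units.val_one,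
      neg_eq_iff_add_eq_zero, ← Nat.cast_one, ← Nat.cast_add, natCast_eq_zero_iff] at h
    exact h
  generalize unitsMap hd c = x
  rcases (Nat.dvd_prime Nat.prime_two).1 hd2 with rfl | rfl <;> revert x <;> decide

lemma exists_unit_unitsMap_eq {m n : ℕ} [NeZero m] [NeZero n] (a : (ZMod m)ˣ) (b : (ZMod n)ˣ)
    (h : unitsMap (Nat.gcd_dvd_left m n) a = unitsMap (Nat.gcd_dvd_right m n) b) :
    ∃ u : (ZMod (m.lcm n))ˣ,
      unitsMap (Nat.dvd_lcm_left m n) u = a ∧ unitsMap (Nat.dvd_lcm_right m n) u = b := by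
  have hab : (a : ZMod m).val ≡ (b : ZMod n).val [MOD m.gcd n] := by
    rw [← natCast_eq_natCast_iff, natCast_val, natCast_val, ← unitsMap_val, ← unitsMap_val, h]
    exact Nat.gcd_dvd_left m n
  obtain ⟨k, hka, hkb⟩ := Nat.chineseRemainder' hab
  have hkm : (k : ZMod m) = a := by
    rw [← natCast_zmod_val (a : ZMod m), natCast_eq_natCast_iff]; exact hka
  have hkn : (k : ZMod n) = b := by
    rw [← natCast_zmod_val (b : ZMod n), natCast_eq_natCast_iff]; exact hkb
  have hk : k.Coprime (m.lcm n) :=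
    Nat.Coprime.coprime_dvd_right (Nat.lcm_dvd_mul m n)
      (((isUnit_iff_coprime k m).1 (hkm ▸ a.isUnit)).mul_right
        ((isUnit_iff_coprime k n).1 (hkn ▸ b.isUnit)))
  refine ⟨unitOfCoprime k hk, Units.ext ?_, Units.ext ?_⟩
  · rw [unitsMap_val, coe_unitOfCoprime, cast_natCast (Nat.dvd_lcm_left m n), hkm]
  · rw [unitsMap_val, coe_unitOfCoprime, cast_natCast (Nat.dvd_lcm_right m n), hkn]

theorem forall_unitsMap_lcm_eq_one_or_eq_neg_one_iff {m n : ℕ} (hm : 3 ≤ m) (hn : n ≠ 0) :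
    (∀ u : (ZMod (m.lcm n))ˣ,
      (unitsMap (Nat.dvd_lcm_right m n) u = 1 ∨ unitsMap (Nat.dvd_lcm_right m n) u = -1) →
        unitsMap (Nat.dvd_lcm_left m n) u = 1 ∨ unitsMap (Nat.dvd_lcm_left m n) u = -1) ↔
      (∀ u : (ZMod (m.lcm n))ˣ,
        unitsMap (Nat.dvd_lcm_right m n) u = 1 → unitsMap (Nat.dvd_lcm_left m n) u = 1) ∨
      m ∈ ({3, 4, 6} : Set ℕ) := by
  refine ⟨fun H => or_iff_not_imp_right.2 fun h346 u hu => ?_, ?_⟩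
  · refine (H u (.inl hu)).resolve_right fun hu' => h346 ?_
    have : NeZero m := ⟨by omega⟩
    have : NeZero n := ⟨hn⟩
    have hg : unitsMap (Nat.gcd_dvd_left m n) (-1) = 1 := by
      rw [← hu', ← MonoidHom.comp_apply, unitsMap_comp,
        ← unitsMap_comp (Nat.gcd_dvd_right m n) (Nat.dvd_lcm_right m n), MonoidHom.comp_apply, hu,
        map_one]
    refine (forall_units_eq_one_or_eq_neg_one_iff hm).1 fun c => ?_
    obtain ⟨v, hvm, hvn⟩ := exists_unit_unitsMap_eq c 1
      (by rw [map_one]; exact unitsMap_eq_one_of_unitsMap_neg_one _ hg c)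
    exact hvm ▸ H v (.inl hvn)
  · rintro (H | h346) u (hu | hu)
    · exact .inl (H u hu)
    · rw [← neg_eq_iff_eq_neg, ← unitsMap_neg] at hu
      rw [← neg_eq_iff_eq_neg, ← unitsMap_neg]
      exact .inr (H _ hu)
    all_goals exact (forall_units_eq_one_or_eq_neg_one_iff hm).2 h346 _

end ZMod

lemma add_inv_eq_add_inv_iff {F : Type*} [Field F] {z w : F} (hz : z ≠ 0) (hw : w ≠ 0) :
    z + z⁻¹ = w + w⁻¹ ↔ z = w ∨ z = w⁻¹ := by
  have key : z + z⁻¹ - (w + w⁻¹) = (z - w) * (z * w - 1) * (z⁻¹ * w⁻¹) := by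
    field_simp
    ring
  rw [← sub_eq_zero, key, mul_eq_zero, mul_eq_zero, sub_eq_zero, sub_eq_zero,
    mul_eq_one_iff_eq_inv₀ hw, or_iff_left (mul_ne_zero (inv_ne_zero hz) (inv_ne_zero hw))]

lemma AlgHom.eq_of_mem_adjoin_simple {F E K : Type*} [Field F] [Field E] [Algebra F E]
    [Semiring K] [Algebra F K] {f g : E →ₐ[F] K} {y : E} (h : f y = g y) {x : E}
    (hx : x ∈ F⟮y⟯) : f x = g x :=
  DFunLike.congr_fun (adjoin_algHom_ext F (φ₁ := f.comp (val _)) (φ₂ := g.comp (val _))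
    (by simpa using h)) ⟨x, hx⟩

namespace IntermediateField

variable {F L : Type*} [Field F] [Field L] [Algebra F L]

theorem mem_adjoin_simple_iff_forall_fixed {E : Type*} [Field E] [Algebra F E]
    [FiniteDimensional F E] [IsGalois F E] {x y : E} :
    x ∈ F⟮y⟯ ↔ ∀ σ : Gal(E/F), σ y = y → σ x = x := by
  rw [← IsGalois.fixedField_fixingSubgroup F⟮y⟯, mem_fixedField_iff]
  refine forall_congr' fun σ => imp_congr_left ⟨fun h => h ⟨y, mem_adjoin_simple_self F y⟩,
    fun h => (mem_fixingSubgroup_iff _ σ).2 fun z hz => ?_⟩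
  exact AlgHom.eq_of_mem_adjoin_simple (f := σ.toAlgHom) (g := AlgHom.id F E) h hz

theorem adjoin_simple_le_adjoin_simple_iff (K : IntermediateField F L) [FiniteDimensional F K]
    [IsGalois F K] (x y : K) :
    F⟮(x : L)⟯ ≤ F⟮(y : L)⟯ ↔ ∀ σ : Gal(K/F), σ y = y → σ x = x := by
  rw [adjoin_simple_le_iff, ← lift_adjoin_simple, mem_lift, mem_adjoin_simple_iff_forall_fixed]

end IntermediateField

namespace IsPrimitiveRoot

section Field

variable {F : Type*} [Field F] {ζ : F} {d : ℕ}

lemma pow_eq_self_iff (hζ : IsPrimitiveRoot ζ d) (hd : d ≠ 0) (b : ℕ) :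
    ζ ^ b = ζ ↔ (b : ZMod d) = 1 := by
  rw [← mul_inv_eq_one₀ (hζ.ne_zero hd), ← zpow_natCast, ← zpow_sub_one₀ (hζ.ne_zero hd),
    hζ.zpow_eq_one_iff_dvd, ← ZMod.intCast_zmod_eq_zero_iff_dvd, Int.cast_sub, Int.cast_natCast,
    Int.cast_one, sub_eq_zero]

lemma pow_eq_inv_iff (hζ : IsPrimitiveRoot ζ d) (hd : d ≠ 0) (b : ℕ) :
    ζ ^ b = ζ⁻¹ ↔ (b : ZMod d) = -1 := by
  rw [← mul_eq_one_iff_eq_inv₀ (hζ.ne_zero hd), ← pow_succ, hζ.pow_eq_one_iff_dvd,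
    ← ZMod.natCast_eq_zero_iff, Nat.cast_succ, add_eq_zero_iff_eq_neg]

lemma pow_add_inv_pow_eq_add_inv_iff (hζ : IsPrimitiveRoot ζ d) (hd : d ≠ 0) (b : ℕ) :
    ζ ^ b + (ζ ^ b)⁻¹ = ζ + ζ⁻¹ ↔ (b : ZMod d) = 1 ∨ (b : ZMod d) = -1 := by
  rw [add_inv_eq_add_inv_iff (pow_ne_zero _ (hζ.ne_zero hd)) (hζ.ne_zero hd),
    hζ.pow_eq_self_iff hd, hζ.pow_eq_inv_iff hd]

end Field

lemma pow_div_of_dvd {M : Type*} [CommMonoid M] {μ : M} {N d : ℕ} [NeZero N]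
    (hμ : IsPrimitiveRoot μ N) (hd : d ∣ N) : IsPrimitiveRoot (μ ^ (N / d)) d := by
  have hdpos : 0 < d := Nat.pos_of_dvd_of_pos hd (NeZero.pos N)
  simpa [Nat.div_div_self hd (NeZero.ne N)] using
    hμ.pow_of_dvd (Nat.div_pos (Nat.le_of_dvd (NeZero.pos N) hd) hdpos).ne' (Nat.div_dvd_of_dvd hd)

end IsPrimitiveRoot

namespace IsCyclotomicExtension

variable {K L : Type*} [Field K] [Field L] [Algebra K L] {N : ℕ} [NeZero N]
  [IsCyclotomicExtension {N} K L] (hirr : Irreducible (cyclotomic N K)) {μ : L}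
  (hμ : IsPrimitiveRoot μ N)
include hμ

lemma autEquivPow_symm_apply_pow (u : (ZMod N)ˣ) (k : ℕ) :
    (autEquivPow L hirr).symm u (μ ^ k) = (μ ^ k) ^ (u : ZMod N).val := by
  have hu : hμ.autToPow K ((autEquivPow L hirr).symm u) = u := by
    -- `autToPow` does not depend on the chosen primitive root
    rw [IsPrimitiveRoot.autToPow_eq_modularCyclotomicCharacter N K hμ,
      ← IsPrimitiveRoot.autToPow_eq_modularCyclotomicCharacter N K (zeta_spec N K L)]
    exact (autEquivPow L hirr).apply_symm_apply u
  rw [map_pow, ← hμ.autToPow_spec K, hu, pow_right_comm]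

lemma autEquivPow_symm_apply_pow_div_eq_self_iff {d : ℕ} (hd : d ∣ N) (u : (ZMod N)ˣ) :
    (autEquivPow L hirr).symm u (μ ^ (N / d)) = μ ^ (N / d) ↔ ZMod.unitsMap hd u = 1 := by
  rw [autEquivPow_symm_apply_pow hirr hμ,
    (hμ.pow_div_of_dvd hd).pow_eq_self_iff (ne_zero_of_dvd_ne_zero (NeZero.ne N) hd),
    Units.ext_iff, ZMod.unitsMap_val, ZMod.natCast_val, Units.val_one]

lemma autEquivPow_symm_apply_pow_div_add_inv_eq_self_iff {d : ℕ} (hd : d ∣ N) (u : (ZMod N)ˣ) :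
    (autEquivPow L hirr).symm u (μ ^ (N / d) + (μ ^ (N / d))⁻¹) = μ ^ (N / d) + (μ ^ (N / d))⁻¹ ↔
      ZMod.unitsMap hd u = 1 ∨ ZMod.unitsMap hd u = -1 := by
  rw [map_add, map_inv₀, autEquivPow_symm_apply_pow hirr hμ,
    (hμ.pow_div_of_dvd hd).pow_add_inv_pow_eq_add_inv_iff
      (ne_zero_of_dvd_ne_zero (NeZero.ne N) hd),
    Units.ext_iff, Units.ext_iff, ZMod.unitsMap_val, ZMod.natCast_val, Units.val_one,
    Units.val_neg, Units.val_one]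

end IsCyclotomicExtension

theorem IsCyclotomicExtension.adjoin_coe_le_adjoin_coe_iff {F L : Type*} [Field F] [Field L]
    [Algebra F L] {N : ℕ} [NeZero N] (K : IntermediateField F L) [IsCyclotomicExtension {N} F K]
    (hirr : Irreducible (cyclotomic N F)) (x y : K) :
    F⟮(x : L)⟯ ≤ F⟮(y : L)⟯ ↔
      ∀ u : (ZMod N)ˣ, (autEquivPow K hirr).symm u y = y → (autEquivPow K hirr).symm u x = x := by
  have : IsGalois F K := isGalois {N} F K
  have : FiniteDimensional F K := finiteDimensional {N} F K
  rw [adjoin_simple_le_adjoin_simple_iff, (autEquivPow K hirr).toEquiv.forall_congr_left]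
  rfl

namespace IsPrimitiveRoot

variable {F L : Type*} [Field F] [Field L] [Algebra F L] {N : ℕ} [NeZero N] {ζ : L}

theorem isCyclotomicExtension_adjoin (hζ : IsPrimitiveRoot ζ N) :
    IsCyclotomicExtension {N} F F⟮ζ⟯ := by
  change IsCyclotomicExtension {N} F F⟮ζ⟯.toSubalgebra
  rw [adjoin_simple_toSubalgebra_of_isAlgebraic
    (hζ.isIntegral (NeZero.pos N)).tower_top.isAlgebraic]
  exact hζ.adjoin_isCyclotomicExtension F

theorem adjoin_pow_div_le_adjoin_pow_div_iff (hζ : IsPrimitiveRoot ζ N)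
    (hirr : Irreducible (cyclotomic N F)) {d e : ℕ} (hd : d ∣ N) (he : e ∣ N) :
    F⟮ζ ^ (N / d)⟯ ≤ F⟮ζ ^ (N / e)⟯ ↔
      ∀ u : (ZMod N)ˣ, ZMod.unitsMap he u = 1 → ZMod.unitsMap hd u = 1 := by
  have := hζ.isCyclotomicExtension_adjoin (F := F)
  have hμ : IsPrimitiveRoot (AdjoinSimple.gen F ζ) N := coe_submonoidClass_iff.1 hζ
  have := IsCyclotomicExtension.adjoin_coe_le_adjoin_coe_iff F⟮ζ⟯ hirr
    (AdjoinSimple.gen F ζ ^ (N / d)) (AdjoinSimple.gen F ζ ^ (N / e))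
  simp only [SubmonoidClass.coe_pow, AdjoinSimple.coe_gen] at this
  exact this.trans <| forall_congr' fun u => imp_congr
    (IsCyclotomicExtension.autEquivPow_symm_apply_pow_div_eq_self_iff hirr hμ he u)
    (IsCyclotomicExtension.autEquivPow_symm_apply_pow_div_eq_self_iff hirr hμ hd u)

theorem adjoin_pow_div_add_inv_le_adjoin_pow_div_add_inv_iff (hζ : IsPrimitiveRoot ζ N)
    (hirr : Irreducible (cyclotomic N F)) {d e : ℕ} (hd : d ∣ N) (he : e ∣ N) :
    F⟮ζ ^ (N / d) + (ζ ^ (N / d))⁻¹⟯ ≤ F⟮ζ ^ (N / e) + (ζ ^ (N / e))⁻¹⟯ ↔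
      ∀ u : (ZMod N)ˣ, (ZMod.unitsMap he u = 1 ∨ ZMod.unitsMap he u = -1) →
        ZMod.unitsMap hd u = 1 ∨ ZMod.unitsMap hd u = -1 := by
  have := hζ.isCyclotomicExtension_adjoin (F := F)
  have hμ : IsPrimitiveRoot (AdjoinSimple.gen F ζ) N := coe_submonoidClass_iff.1 hζ
  have := IsCyclotomicExtension.adjoin_coe_le_adjoin_coe_iff F⟮ζ⟯ hirr
    (AdjoinSimple.gen F ζ ^ (N / d) + (AdjoinSimple.gen F ζ ^ (N / d))⁻¹)
    (AdjoinSimple.gen F ζ ^ (N / e) + (AdjoinSimple.gen F ζ ^ (N / e))⁻¹)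
  simp only [IntermediateField.coe_add, IntermediateField.coe_inv, SubmonoidClass.coe_pow,
    AdjoinSimple.coe_gen] at this
  exact this.trans <| forall_congr' fun u => imp_congr
    (IsCyclotomicExtension.autEquivPow_symm_apply_pow_div_add_inv_eq_self_iff hirr hμ he u)
    (IsCyclotomicExtension.autEquivPow_symm_apply_pow_div_add_inv_eq_self_iff hirr hμ hd u)

end IsPrimitiveRoot

lemma isPrimitiveRoot_zeta (N : ℕ) [NeZero N] : IsPrimitiveRoot (zeta N) N :=
  Complex.isPrimitiveRoot_exp N (NeZero.ne N)

lemma zeta_pow_div {d N : ℕ} [NeZero N] (hd : d ∣ N) : zeta N ^ (N / d) = zeta d := by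
  have hd0 : (d : ℂ) ≠ 0 := Nat.cast_ne_zero.2 (ne_zero_of_dvd_ne_zero (NeZero.ne N) hd)
  have hN0 : (N : ℂ) ≠ 0 := Nat.cast_ne_zero.2 (NeZero.ne N)
  rw [zeta, zeta, ← Complex.exp_nat_mul, Nat.cast_div hd hd0]
  congr 1
  field_simp

theorem cyclField_le_cyclField_iff {m n : ℕ} (hm : m ≠ 0) (hn : n ≠ 0) :
    cyclField m ≤ cyclField n ↔ ∀ u : (ZMod (m.lcm n))ˣ,
      ZMod.unitsMap (Nat.dvd_lcm_right m n) u = 1 → ZMod.unitsMap (Nat.dvd_lcm_left m n) u = 1 := by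
  have : NeZero (m.lcm n) := ⟨Nat.lcm_ne_zero hm hn⟩
  rw [cyclField, cyclField, ← zeta_pow_div (Nat.dvd_lcm_left m n),
    ← zeta_pow_div (Nat.dvd_lcm_right m n)]
  exact (isPrimitiveRoot_zeta _).adjoin_pow_div_le_adjoin_pow_div_iff
    (cyclotomic.irreducible_rat (NeZero.pos _)) _ _

theorem realCyclField_le_realCyclField_iff {m n : ℕ} (hm : m ≠ 0) (hn : n ≠ 0) :
    realCyclField m ≤ realCyclField n ↔ ∀ u : (ZMod (m.lcm n))ˣ,
      (ZMod.unitsMap (Nat.dvd_lcm_right m n) u = 1 ∨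
          ZMod.unitsMap (Nat.dvd_lcm_right m n) u = -1) →
        ZMod.unitsMap (Nat.dvd_lcm_left m n) u = 1 ∨
          ZMod.unitsMap (Nat.dvd_lcm_left m n) u = -1 := by
  have : NeZero (m.lcm n) := ⟨Nat.lcm_ne_zero hm hn⟩
  rw [realCyclField, realCyclField, ← zeta_pow_div (Nat.dvd_lcm_left m n),
    ← zeta_pow_div (Nat.dvd_lcm_right m n)]
  exact (isPrimitiveRoot_zeta _).adjoin_pow_div_add_inv_le_adjoin_pow_div_add_inv_iff
    (cyclotomic.irreducible_rat (NeZero.pos _)) _ _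

/-- For `m, n ≥ 3`: `k_m ⊆ k_n` iff `ℚ(ζ_m) ⊆ ℚ(ζ_n)` or `m ∈ {3,4,6}`. -/
theorem realCyclField_le_iff (m n : ℕ) (hm : 3 ≤ m) (hn : 3 ≤ n) :
    realCyclField m ≤ realCyclField n ↔
      (cyclField m ≤ cyclField n ∨ m ∈ ({3, 4, 6} : Set ℕ)) := by
  rw [realCyclField_le_realCyclField_iff (by omega) (by omega),
    cyclField_le_cyclField_iff (by omega) (by omega)]
  exact ZMod.forall_unitsMap_lcm_eq_one_or_eq_neg_one_iff hm (by omega)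
end

section
/- Let m, n ≥ 3 and let Λ ⊆ ℂ be a set satisfying property (Hom) with respect to K_n: for every finite subset F of the n-th cyclotomic field Q(ζ_n), some homothetic image of F is contained in Λ. Then if the maximal real subfield k_m is contained in k_n, Λ contains an affinely regular m-gon. -/
/-- `Ψ : ℂ → ℂ` is a non-singular affine transformation of the plane. -/
def IsNSAffine (Ψ : ℂ → ℂ) : Prop :=
  ∃ (A : ℂ →ₗ[ℝ] ℂ) (t : ℂ), Function.Bijective A ∧ ∀ z : ℂ, Ψ z = A z + t

/-- There is an affinely regular `m`-gon with all vertices in `Λ`. -/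
def HasAffRegularGon (m : ℕ) (Λ : Set ℂ) : Prop :=
  ∃ Ψ : ℂ → ℂ, IsNSAffine Ψ ∧ ∀ j : Fin m, Ψ ((zeta m) ^ (j : ℕ)) ∈ Λ

lemma zeta_eq_exp_mul_I (n : ℕ) : zeta n = Complex.exp ((2 * Real.pi / n : ℝ) * Complex.I) := by
  rw [zeta]
  push_cast
  ring_nf

lemma zeta_add_inv (n : ℕ) : zeta n + (zeta n)⁻¹ = ((2 * Real.cos (2 * Real.pi / n) : ℝ) : ℂ) := by
  rw [zeta_eq_exp_mul_I, ← Complex.exp_neg, ← neg_mul]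
  push_cast
  rw [Complex.two_cos]

lemma zeta_im_pos {n : ℕ} (hn : 3 ≤ n) : 0 < (zeta n).im := by
  have hn' : (3 : ℝ) ≤ n := by exact_mod_cast hn
  rw [zeta_eq_exp_mul_I, Complex.exp_ofReal_mul_I_im]
  apply Real.sin_pos_of_pos_of_lt_pi (by positivity)
  rw [div_lt_iff₀ (by positivity)]
  nlinarith [Real.pi_pos]

lemma realCyclField_le_cyclField (n : ℕ) : realCyclField n ≤ cyclField n := by
  have hζ := IntermediateField.mem_adjoin_simple_self ℚ (zeta n)
  exact IntermediateField.adjoin_simple_le_iff.mpr (add_mem hζ (inv_mem hζ))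

lemma Complex.linearIndependent_one_of_im_ne_zero {w : ℂ} (hw : w.im ≠ 0) :
    LinearIndependent ℝ ![1, w] := by
  refine LinearIndependent.pair_iff.mpr fun s t hst => ?_
  have him := congrArg Complex.im hst
  have hre := congrArg Complex.re hst
  simp only [Complex.add_im, Complex.add_re, Complex.real_smul, Complex.mul_im, Complex.mul_re,
    Complex.ofReal_re, Complex.ofReal_im, Complex.one_re, Complex.one_im, Complex.zero_re,
    Complex.zero_im] at him hre
  have ht : t = 0 := by simpa [hw] using him
  subst ht
  simpa using hre

lemma Complex.exists_linearEquiv_map_one_map_eq {w γ : ℂ} (hw : w.im ≠ 0) (hγ : γ.im ≠ 0) :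
    ∃ A : ℂ ≃ₗ[ℝ] ℂ, A 1 = 1 ∧ A w = γ := by
  have hcard : Fintype.card (Fin 2) = Module.finrank ℝ ℂ := by simp
  let bw := basisOfLinearIndependentOfCardEqFinrank (linearIndependent_one_of_im_ne_zero hw) hcard
  let bγ := basisOfLinearIndependentOfCardEqFinrank (linearIndependent_one_of_im_ne_zero hγ) hcard
  refine ⟨bw.equiv bγ (Equiv.refl _), ?_, ?_⟩
  · simpa [bw, bγ] using bw.equiv_apply 0 bγ (Equiv.refl _)
  · simpa [bw, bγ] using bw.equiv_apply 1 bγ (Equiv.refl _)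

lemma LinearEquiv.isNSAffine_add (B : ℂ ≃ₗ[ℝ] ℂ) (t : ℂ) : IsNSAffine (fun z => B z + t) :=
  ⟨B.toLinearMap, t, B.bijective, fun _ => rfl⟩

section PowMem

variable {S : Type*} [SetLike S ℂ] [SubringClass S ℂ] {K : S}

lemma exists_pow_eq_ofReal_add_ofReal_mul {z : ℂ} {c : ℝ} (hc : (c : ℂ) ∈ K)
    (hz : z ^ 2 = c * z - 1) (j : ℕ) :
    ∃ a b : ℝ, (a : ℂ) ∈ K ∧ (b : ℂ) ∈ K ∧ z ^ j = a + b * z := by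
  induction j with
  | zero => exact ⟨1, 0, by simp [one_mem], by simp [zero_mem], by simp⟩
  | succ j ih =>
    obtain ⟨a, b, ha, hb, hj⟩ := ih
    refine ⟨-b, a + b * c, by simpa using neg_mem hb,
      by push_cast; exact add_mem ha (mul_mem hb hc), ?_⟩
    rw [pow_succ, hj]
    push_cast
    linear_combination b * hz

lemma LinearMap.map_pow_mem (A : ℂ →ₗ[ℝ] ℂ) {z : ℂ} {c : ℝ} (hc : (c : ℂ) ∈ K)
    (hz : z ^ 2 = c * z - 1) (h1 : A 1 ∈ K) (hAz : A z ∈ K) (j : ℕ) : A (z ^ j) ∈ K := by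
  obtain ⟨a, b, ha, hb, hj⟩ := exists_pow_eq_ofReal_add_ofReal_mul hc hz j
  have hA : A (z ^ j) = a * A 1 + b * A z := by
    rw [hj, show (a : ℂ) + b * z = a • (1 : ℂ) + b • z by simp [Complex.real_smul], map_add,
      map_smul, map_smul, Complex.real_smul, Complex.real_smul]
  rw [hA]
  exact add_mem (mul_mem ha h1) (mul_mem hb hAz)

end PowMem

/-- Let `m, n ≥ 3` and let `Λ ⊆ ℂ` satisfy property (Hom) w.r.t. `K_n`: every finite
subset of `ℚ(ζ_n)` has a homothetic image (`z ↦ λz + t`, `λ > 0` real) inside `Λ`.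
If `k_m ⊆ k_n`, then `Λ` contains an affinely regular `m`-gon. -/
theorem hasAffRegularGon_of_hom (m n : ℕ) (hm : 3 ≤ m) (hn : 3 ≤ n) (Λ : Set ℂ)
    (hhom : ∀ F : Finset ℂ, (F : Set ℂ) ⊆ (cyclField n : Set ℂ) →
      ∃ (lam : ℝ) (t : ℂ), 0 < lam ∧ ∀ z ∈ F, (lam : ℂ) * z + t ∈ Λ)
    (hk : realCyclField m ≤ realCyclField n) :
    HasAffRegularGon m Λ := by
  have hcK : ((2 * Real.cos (2 * Real.pi / m) : ℝ) : ℂ) ∈ cyclField n := by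
    rw [← zeta_add_inv]
    exact realCyclField_le_cyclField n (hk (IntermediateField.mem_adjoin_simple_self ℚ _))
  have hζ_sq : zeta m ^ 2 = ((2 * Real.cos (2 * Real.pi / m) : ℝ) : ℂ) * zeta m - 1 := by
    have hζ0 : zeta m ≠ 0 := Complex.exp_ne_zero _
    rw [← zeta_add_inv]
    field_simp
    ring
  obtain ⟨A, hA1, hAζ⟩ := Complex.exists_linearEquiv_map_one_map_eq (zeta_im_pos hm).ne'
    (zeta_im_pos hn).ne'
  have hvert : ∀ j, A (zeta m ^ j) ∈ cyclField n := A.toLinearMap.map_pow_mem hcK hζ_sq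
    (by simp [hA1, one_mem])
    (by rw [LinearEquiv.coe_coe, hAζ]; exact IntermediateField.mem_adjoin_simple_self ℚ _)
  obtain ⟨lam, t, hlam, hΛ⟩ := hhom ((Finset.range m).image fun j => A (zeta m ^ j)) (by
    simpa [Set.subset_def] using fun j _ => hvert j)
  refine ⟨_, (A.trans (LinearEquiv.smulOfNeZero ℝ ℂ lam hlam.ne')).isNSAffine_add t, fun j => ?_⟩
  simpa [Complex.real_smul] using hΛ _ (Finset.mem_image_of_mem _ (Finset.mem_range.mpr j.isLt))
end
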